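/- For subsets A, B of F_p and λ, μ ∈ F_p^*, the sum over all (a,b) ∈ F_p^2 of (ι(ℓ_{λa,μb}) − |A||B|/p)² is at most p·|A|·|B|. -/

import Mathlib

/-!
Multiplying slopes by `λ` and intercepts by `μ` only permutes the lines, so after expanding the
square it suffices to know the first two moments of `ι` over all `p²` lines. Each point of `A × B`
lies on exactly one line of each slope, so `∑ ι = p |A| |B|`. The second moment `∑ ι²` counts
pairs of points of `A × B` together with a line through both: a point lies on `p` lines and two
distinct points on at most one, so `∑ ι² ≤ p |A| |B| + (|A| |B|)²`; subtracting `(∑ ι)² / p²` leaves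
`p |A| |B|`.
-/

open Finset

/-- Incidence count: number of points of `A × B` on the line `y = a x + b`. -/
def inc {p : ℕ} [Fact p.Prime] (A B : Finset (ZMod p)) (a b : ZMod p) : ℕ :=
  ((A ×ˢ B).filter (fun xy => xy.2 = a * xy.1 + b)).card

section Lines

variable {F : Type*} [Field F] [Fintype F] [DecidableEq F]

def linesThrough (P : F × F) : Finset (F × F) :=
  {ab | P.2 = ab.1 * P.1 + ab.2}

lemma mem_linesThrough {P ab : F × F} : ab ∈ linesThrough P ↔ P.2 = ab.1 * P.1 + ab.2 := by
  simp [linesThrough]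

lemma card_linesThrough_le (P : F × F) : #(linesThrough P) ≤ Fintype.card F := by
  refine card_le_card_of_injOn Prod.fst (fun _ _ ↦ mem_coe.2 (mem_univ _)) ?_
  intro ab hab ab' hab' hfst
  rw [mem_coe, mem_linesThrough] at hab hab'
  exact Prod.ext hfst (by linear_combination hab' - hab - P.1 * hfst)

lemma card_linesThrough_inter_le_one {P Q : F × F} (hPQ : P ≠ Q) :
    #(linesThrough P ∩ linesThrough Q) ≤ 1 := by
  refine card_le_one.2 fun ab hab ab' hab' ↦ ?_
  simp only [mem_inter, mem_linesThrough] at hab hab'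
  obtain ⟨hP, hQ⟩ := hab
  obtain ⟨hP', hQ'⟩ := hab'
  have hx : P.1 - Q.1 ≠ 0 := by
    refine sub_ne_zero.2 fun hx ↦ hPQ (Prod.ext hx ?_)
    rw [hP, hQ, hx]
  have hslope : ab.1 = ab'.1 :=
    mul_right_cancel₀ hx (by linear_combination hQ - hP + hP' - hQ')
  exact Prod.ext hslope (by linear_combination hP' - hP - P.1 * hslope)

lemma sum_sum_card_linesThrough_inter_le (S : Finset (F × F)) :
    ∑ P ∈ S, ∑ Q ∈ S, #(linesThrough P ∩ linesThrough Q)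
      ≤ #S * Fintype.card F + #S ^ 2 := by
  have hterm : ∀ P Q : F × F,
      #(linesThrough P ∩ linesThrough Q) ≤ (if P = Q then Fintype.card F else 0) + 1 := by
    intro P Q
    split_ifs with hPQ
    · subst hPQ
      rw [inter_self]
      exact (card_linesThrough_le P).trans (Nat.le_succ _)
    · exact (card_linesThrough_inter_le_one hPQ).trans_eq (zero_add 1).symm
  calc ∑ P ∈ S, ∑ Q ∈ S, #(linesThrough P ∩ linesThrough Q)
      ≤ ∑ P ∈ S, ∑ Q ∈ S, ((if P = Q then Fintype.card F else 0) + 1) :=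
        sum_le_sum fun P _ ↦ sum_le_sum fun Q _ ↦ hterm P Q
    _ = #S * Fintype.card F + #S ^ 2 := by
        simp only [sum_add_distrib, sum_ite_eq, sum_ite_mem, inter_self, sum_const, smul_eq_mul,
          mul_one, sq]

end Lines

lemma Fintype.sum_prod_mul_left₀ {G M : Type*} [GroupWithZero G] [Fintype G] [AddCommMonoid M]
    {lam mu : G} (hlam : lam ≠ 0) (hmu : mu ≠ 0) (f : G × G → M) :
    ∑ ℓ : G × G, f (lam * ℓ.1, mu * ℓ.2) = ∑ ℓ, f ℓ :=
  Fintype.sum_equiv ((Equiv.mulLeft₀ lam hlam).prodCongr (Equiv.mulLeft₀ mu hmu)) _ _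
    fun _ ↦ rfl

lemma Finset.sum_sub_sq {ι R : Type*} [CommRing R] (s : Finset ι) (f : ι → R) (c : R) :
    ∑ i ∈ s, (f i - c) ^ 2 = ∑ i ∈ s, f i ^ 2 - 2 * c * ∑ i ∈ s, f i + #s * c ^ 2 := by
  simp only [sub_sq, sum_add_distrib, sum_sub_distrib, mul_sum, sum_const, nsmul_eq_mul]
  congr 2
  exact sum_congr rfl fun _ _ ↦ by ring

section Incidences

variable {p : ℕ} [Fact p.Prime] (A B : Finset (ZMod p))

lemma inc_eq_card_filter_linesThrough (a b : ZMod p) :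
    inc A B a b = #{P ∈ A ×ˢ B | (a, b) ∈ linesThrough P} := by
  simp only [inc, mem_linesThrough]

lemma sum_inc_right (a : ZMod p) : ∑ b, inc A B a b = #A * #B := by
  have hfiber : ∀ b, inc A B a b = #{P ∈ A ×ˢ B | P.2 - a * P.1 = b} := fun b ↦ by
    simp only [inc, sub_eq_iff_eq_add']
  simp only [hfiber]
  rw [← card_eq_sum_card_fiberwise fun P _ ↦ mem_univ (P.2 - a * P.1), card_product]

lemma sum_inc_sq_eq :
    ∑ ℓ : ZMod p × ZMod p, inc A B ℓ.1 ℓ.2 ^ 2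
      = ∑ P ∈ A ×ˢ B, ∑ Q ∈ A ×ˢ B, #(linesThrough P ∩ linesThrough Q) := by
  simp only [inc_eq_card_filter_linesThrough, card_filter, sq, sum_mul_sum]
  rw [sum_comm]
  refine sum_congr rfl fun P _ ↦ ?_
  rw [sum_comm]
  refine sum_congr rfl fun Q _ ↦ ?_
  rw [← filter_univ_mem (linesThrough P ∩ linesThrough Q), card_filter]
  simp only [mem_inter, ite_zero_mul_ite_zero, mul_one]

lemma sum_inc : ∑ ℓ : ZMod p × ZMod p, inc A B ℓ.1 ℓ.2 = p * (#A * #B) := by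
  simp only [Fintype.sum_prod_type, sum_inc_right, sum_const, card_univ, ZMod.card, smul_eq_mul]

lemma sum_inc_sq_le :
    ∑ ℓ : ZMod p × ZMod p, inc A B ℓ.1 ℓ.2 ^ 2 ≤ #A * #B * p + (#A * #B) ^ 2 := by
  simpa only [sum_inc_sq_eq, card_product, ZMod.card] using
    sum_sum_card_linesThrough_inter_le (A ×ˢ B)

end Incidences

/-- `∑_{(a,b)} (ι(ℓ_{λa,μb}) − AB/p)² ≤ pAB`. -/
theorem sum_inc_dev_sq_le (p : ℕ) [Fact p.Prime] (A B : Finset (ZMod p))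
    (lam mu : ZMod p) (hlam : lam ≠ 0) (hmu : mu ≠ 0) :
    ∑ a : ZMod p, ∑ b : ZMod p,
        ((inc A B (lam * a) (mu * b) : ℝ) - (A.card : ℝ) * B.card / p) ^ 2
      ≤ (p : ℝ) * A.card * B.card := by
  have hp : (p : ℝ) ≠ 0 := Nat.cast_ne_zero.2 (Fact.out : p.Prime).ne_zero
  have hsum : ∑ ℓ : ZMod p × ZMod p, (inc A B ℓ.1 ℓ.2 : ℝ) = p * (#A * #B) := by
    exact_mod_cast sum_inc A B
  have hsq : ∑ ℓ : ZMod p × ZMod p, (inc A B ℓ.1 ℓ.2 : ℝ) ^ 2 ≤ #A * #B * p + (#A * #B) ^ 2 := by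
    exact_mod_cast sum_inc_sq_le A B
  set N : ℝ := (#A : ℝ) * #B
  rw [← Fintype.sum_prod_type' (fun a b ↦ ((inc A B (lam * a) (mu * b) : ℝ) - N / p) ^ 2),
    Fintype.sum_prod_mul_left₀ hlam hmu fun ℓ ↦ ((inc A B ℓ.1 ℓ.2 : ℝ) - N / p) ^ 2,
    sum_sub_sq, hsum, card_univ, Fintype.card_prod, ZMod.card]
  calc _ ≤ N * p + N ^ 2 - 2 * (N / p) * (p * N) + ((p * p : ℕ) : ℝ) * (N / p) ^ 2 := by
        gcongr
    _ = p * N := by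
        push_cast
        field_simp
        ring
    _ = p * #A * #B := by ring
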